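/- For δ > 0, define g_δ : ℝ → ℝ by g_δ(t) = -|t| + (1/δ)(1+δ|t|)log(1+δ|t|). Then for every λ ∈ (0,1) and every δ_* > 0, there exists a constant C(λ) with 0 < C(λ) ≤ max{1, 2^(1+λ)/(λe)} such that 0 ≤ g_δ(t) ≤ δ_*^λ · C(λ) · |t|^(1+λ) for all t ∈ ℝ and all δ with 0 < δ ≤ δ_*; moreover the second inequality is strict for t ≠ 0. -/

import Mathlib

open Real

lemma log_le_div_e {y : ℝ} (hy : 0 < y) : Real.log y ≤ y / Real.exp 1 := by
  have h1 : Real.log (y / Real.exp 1) ≤ y / Real.exp 1 - 1 :=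
    Real.log_le_sub_one_of_pos (div_pos hy (Real.exp_pos 1))
  rw [Real.log_div (ne_of_gt hy) (ne_of_gt (Real.exp_pos 1)), Real.log_exp] at h1
  linarith

lemma log_le_rpow_div {x lam : ℝ} (hx : 0 < x) (hlam : 0 < lam) :
    Real.log x ≤ x ^ lam / (lam * Real.exp 1) := by
  have h1 : Real.log (x ^ lam) = lam * Real.log x := Real.log_rpow hx lam
  have h2 : Real.log (x ^ lam) ≤ x ^ lam / Real.exp 1 :=
    log_le_div_e (Real.rpow_pos_of_pos hx lam)
  rw [h1] at h2
  rw [le_div_iff₀ (by positivity)]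
  have he : (0:ℝ) < Real.exp 1 := Real.exp_pos 1
  have h3 := mul_le_mul_of_nonneg_right h2 he.le
  rw [div_mul_cancel₀ _ (ne_of_gt he)] at h3
  nlinarith

lemma h_nonneg {s : ℝ} (hs : 0 ≤ s) : s ≤ (1 + s) * Real.log (1 + s) := by
  have hx : (0:ℝ) < 1 + s := by linarith
  have h1 : Real.log (1 + s)⁻¹ ≤ (1 + s)⁻¹ - 1 :=
    Real.log_le_sub_one_of_pos (by positivity)
  rw [Real.log_inv] at h1
  have h2 := mul_le_mul_of_nonneg_left h1 hx.le
  have h3 : (1 + s) * (1 + s)⁻¹ = 1 := mul_inv_cancel₀ (ne_of_gt hx)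
  nlinarith

lemma h_lt {s lam : ℝ} (hs : 0 < s) (hlam0 : 0 < lam) (hlam1 : lam < 1) :
    (1 + s) * Real.log (1 + s) - s
      < max 1 ((2:ℝ) ^ (1 + lam) / (lam * Real.exp 1)) * s ^ (1 + lam) := by
  set C := max 1 ((2:ℝ) ^ (1 + lam) / (lam * Real.exp 1)) with hC
  have hC1 : (1:ℝ) ≤ C := le_max_left _ _
  have hx : (0:ℝ) < 1 + s := by linarith
  have hsp : (0:ℝ) < s ^ (1 + lam) := Real.rpow_pos_of_pos hs _
  rcases le_or_gt s 1 with h1 | h1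
  · -- small s : h(s) < s^2 ≤ s^(1+lam) ≤ C s^(1+lam)
    have hlog : Real.log (1 + s) < s := by
      have := Real.log_lt_sub_one_of_pos hx (by linarith)
      linarith
    have hsq : s ^ ((2:ℝ)) ≤ s ^ (1 + lam) :=
      Real.rpow_le_rpow_of_exponent_ge hs h1 (by linarith)
    have hsq2 : s ^ ((2:ℝ)) = s * s := by
      rw [show (2:ℝ) = ((2:ℕ):ℝ) by norm_num, Real.rpow_natCast]; ring
    have : (1 + s) * Real.log (1 + s) - s < s * s := by nlinarith
    calc (1 + s) * Real.log (1 + s) - s < s * s := this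
      _ = s ^ ((2:ℝ)) := hsq2.symm
      _ ≤ s ^ (1 + lam) := hsq
      _ = 1 * s ^ (1 + lam) := (one_mul _).symm
      _ ≤ C * s ^ (1 + lam) := by
          exact mul_le_mul_of_nonneg_right hC1 hsp.le
  · -- large s
    have hlog : Real.log (1 + s) ≤ (1 + s) ^ lam / (lam * Real.exp 1) :=
      log_le_rpow_div hx hlam0
    have h2s : (1 + s) ≤ 2 * s := by linarith
    have hrp : (1 + s) ^ lam ≤ (2 * s) ^ lam :=
      Real.rpow_le_rpow hx.le h2s hlam0.le
    have hlogpos : 0 < Real.log (1 + s) := Real.log_pos (by linarith)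
    have key : (1 + s) * Real.log (1 + s) ≤ (2 * s) * ((2 * s) ^ lam / (lam * Real.exp 1)) := by
      have e1 : (1 + s) * Real.log (1 + s) ≤ (2 * s) * Real.log (1 + s) :=
        mul_le_mul_of_nonneg_right h2s hlogpos.le
      have e2 : (2 * s) * Real.log (1 + s) ≤ (2 * s) * ((2 * s) ^ lam / (lam * Real.exp 1)) := by
        apply mul_le_mul_of_nonneg_left _ (by linarith)
        calc Real.log (1 + s) ≤ (1 + s) ^ lam / (lam * Real.exp 1) := hlog
          _ ≤ (2 * s) ^ lam / (lam * Real.exp 1) := by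
            gcongr
      linarith
    have expand : (2 * s) * ((2 * s) ^ lam / (lam * Real.exp 1))
        = ((2:ℝ) ^ (1 + lam) / (lam * Real.exp 1)) * s ^ (1 + lam) := by
      rw [Real.mul_rpow (by norm_num) hs.le]
      rw [Real.rpow_add (by norm_num : (0:ℝ) < 2), Real.rpow_add hs, Real.rpow_one, Real.rpow_one]
      field_simp
    have hCge : (2:ℝ) ^ (1 + lam) / (lam * Real.exp 1) ≤ C := le_max_right _ _
    calc (1 + s) * Real.log (1 + s) - s < (1 + s) * Real.log (1 + s) := by linarith
      _ ≤ (2 * s) * ((2 * s) ^ lam / (lam * Real.exp 1)) := key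
      _ = ((2:ℝ) ^ (1 + lam) / (lam * Real.exp 1)) * s ^ (1 + lam) := expand
      _ ≤ C * s ^ (1 + lam) := mul_le_mul_of_nonneg_right hCge hsp.le

theorem g_delta_bounds (lam δstar : ℝ) (hlam0 : 0 < lam) (hlam1 : lam < 1)
    (hδstar : 0 < δstar) :
    ∃ C : ℝ, 0 < C ∧ C ≤ max 1 ((2 : ℝ) ^ (1 + lam) / (lam * Real.exp 1)) ∧
      ∀ t δ : ℝ, 0 < δ → δ ≤ δstar →
        (0 ≤ -|t| + (1 / δ) * (1 + δ * |t|) * Real.log (1 + δ * |t|) ∧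
         -|t| + (1 / δ) * (1 + δ * |t|) * Real.log (1 + δ * |t|)
            ≤ δstar ^ lam * C * |t| ^ (1 + lam)) ∧
        (t ≠ 0 →
         -|t| + (1 / δ) * (1 + δ * |t|) * Real.log (1 + δ * |t|)
            < δstar ^ lam * C * |t| ^ (1 + lam)) := by
  set C := max 1 ((2:ℝ) ^ (1 + lam) / (lam * Real.exp 1)) with hCdef
  have hCpos : (0:ℝ) < C := lt_of_lt_of_le one_pos (le_max_left _ _)
  refine ⟨C, hCpos, le_refl _, ?_⟩
  intro t δ hδ hδs
  have hs0 : (0:ℝ) ≤ δ * |t| := mul_nonneg hδ.le (abs_nonneg t)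
  -- lower bound
  have lower : 0 ≤ -|t| + (1 / δ) * (1 + δ * |t|) * Real.log (1 + δ * |t|) := by
    have key := h_nonneg hs0
    have h2 := mul_le_mul_of_nonneg_left key (by positivity : (0:ℝ) ≤ 1/δ)
    have h3 : (1/δ) * (δ * |t|) = |t| := by field_simp
    have h4 : (1/δ) * (1 + δ * |t|) * Real.log (1 + δ * |t|)
        = (1/δ) * ((1 + δ * |t|) * Real.log (1 + δ * |t|)) := by ring
    linarith
  -- strict upper bound for t ≠ 0
  have strict : t ≠ 0 →
      -|t| + (1 / δ) * (1 + δ * |t|) * Real.log (1 + δ * |t|)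
        < δstar ^ lam * C * |t| ^ (1 + lam) := by
    intro ht
    have htpos : 0 < |t| := abs_pos.mpr ht
    have hspos : 0 < δ * |t| := mul_pos hδ htpos
    have key := h_lt hspos hlam0 hlam1
    have e1 : -|t| + (1/δ) * (1 + δ * |t|) * Real.log (1 + δ * |t|)
        = (1/δ) * ((1 + δ * |t|) * Real.log (1 + δ * |t|) - δ * |t|) := by
      field_simp; ring
    have e2 : (1/δ) * ((1 + δ * |t|) * Real.log (1 + δ * |t|) - δ * |t|)
        < (1/δ) * (C * (δ * |t|) ^ (1 + lam)) :=
      mul_lt_mul_of_pos_left key (by positivity)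
    have e3 : (1/δ) * (C * (δ * |t|) ^ (1 + lam)) ≤ δstar ^ lam * C * |t| ^ (1 + lam) := by
      rw [Real.mul_rpow hδ.le (abs_nonneg t), Real.rpow_add hδ, Real.rpow_one]
      have hdl : δ ^ lam ≤ δstar ^ lam := Real.rpow_le_rpow hδ.le hδs hlam0.le
      have e4 : (1/δ) * (C * (δ * δ ^ lam * |t| ^ (1 + lam)))
          = C * δ ^ lam * |t| ^ (1 + lam) := by field_simp
      rw [e4]
      have e5 := mul_le_mul_of_nonneg_right
        (mul_le_mul_of_nonneg_left hdl hCpos.le)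
        (Real.rpow_nonneg (abs_nonneg t) (1 + lam))
      nlinarith [e5]
    linarith [e1 ▸ (lt_of_lt_of_le e2 e3)]
  refine ⟨⟨lower, ?_⟩, strict⟩
  by_cases ht : t = 0
  · subst ht
    simp [Real.zero_rpow (by positivity : (1:ℝ) + lam ≠ 0)]
  · exact (strict ht).le
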